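/- arXiv:math/0609606 — 4 statements merged into one kernel-verified Lean document; each statement's English description precedes it below -/
import Mathlib

section
/- If Y is a complete metric space, then Q_Q(Y) equipped with the metric 𝒮 is a complete metric space. -/
/-- The Almgren distance on `Q`-tuples: `min` over permutations of the max distance. -/
noncomputable def qS {Y : Type*} [MetricSpace Y] {Q : ℕ} (x y : Fin Q → Y) : ℝ :=
  sInf {r | ∃ σ : Equiv.Perm (Fin Q), r = ⨆ i, dist (x i) (y (σ i))}

section Aux

variable {Y : Type*} [MetricSpace Y] {Q : ℕ}

lemma qS_set_eq (x y : Fin Q → Y) :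
    {r | ∃ σ : Equiv.Perm (Fin Q), r = ⨆ i, dist (x i) (y (σ i))} =
      Set.range (fun σ : Equiv.Perm (Fin Q) => ⨆ i, dist (x i) (y (σ i))) := by
  ext r
  simp [Set.range, eq_comm]

lemma qS_le (x y : Fin Q → Y) (σ : Equiv.Perm (Fin Q)) :
    qS x y ≤ ⨆ i, dist (x i) (y (σ i)) := by
  apply csInf_le
  · rw [qS_set_eq]
    exact (Set.finite_range _).bddBelow
  · exact ⟨σ, rfl⟩

lemma qS_exists_perm (x y : Fin Q → Y) :
    ∃ σ : Equiv.Perm (Fin Q), qS x y = ⨆ i, dist (x i) (y (σ i)) := by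
  have hne : {r | ∃ σ : Equiv.Perm (Fin Q), r = ⨆ i, dist (x i) (y (σ i))}.Nonempty :=
    ⟨_, 1, rfl⟩
  have hfin : {r | ∃ σ : Equiv.Perm (Fin Q), r = ⨆ i, dist (x i) (y (σ i))}.Finite := by
    rw [qS_set_eq]; exact Set.finite_range _
  exact hne.csInf_mem hfin

lemma dist_le_iSup (x y : Fin Q → Y) (σ : Equiv.Perm (Fin Q)) (j : Fin Q) :
    dist (x j) (y (σ j)) ≤ ⨆ i, dist (x i) (y (σ i)) :=
  le_ciSup (f := fun i => dist (x i) (y (σ i)))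
    (Set.Finite.bddAbove (Set.finite_range _)) j

lemma qS_nonneg (x y : Fin Q → Y) : 0 ≤ qS x y := by
  apply le_csInf
  · exact ⟨_, 1, rfl⟩
  · rintro r ⟨σ, rfl⟩
    exact Real.iSup_nonneg fun i => dist_nonneg

lemma qS_triangle [NeZero Q] (x y z : Fin Q → Y) : qS x z ≤ qS x y + qS y z := by
  have : Nonempty (Fin Q) := ⟨⟨0, Nat.pos_of_ne_zero (NeZero.ne Q)⟩⟩
  obtain ⟨σ, hσ⟩ := qS_exists_perm x y
  obtain ⟨τ, hτ⟩ := qS_exists_perm y z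
  calc qS x z ≤ ⨆ i, dist (x i) (z ((τ * σ) i)) := qS_le x z (τ * σ)
    _ ≤ qS x y + qS y z := by
        apply ciSup_le
        intro i
        calc dist (x i) (z ((τ * σ) i))
            ≤ dist (x i) (y (σ i)) + dist (y (σ i)) (z (τ (σ i))) := dist_triangle _ _ _
          _ ≤ qS x y + qS y z := by
              rw [hσ, hτ]
              exact add_le_add (dist_le_iSup x y σ i) (dist_le_iSup y z τ (σ i))

end Aux

/-- if Y is complete then Q_Q(Y) with the metric 𝒮 is complete:
every 𝒮-Cauchy sequence of unordered Q-tuples converges in 𝒮. -/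
theorem stmt1 {Y : Type*} [MetricSpace Y] [CompleteSpace Y] {Q : ℕ} [NeZero Q]
    (u : ℕ → Fin Q → Y)
    (hu : ∀ ε : ℝ, 0 < ε → ∃ N, ∀ m ≥ N, ∀ n ≥ N, qS (u m) (u n) < ε) :
    ∃ a : Fin Q → Y, Filter.Tendsto (fun n => qS (u n) a) Filter.atTop (nhds 0) := by
  have hQ : Nonempty (Fin Q) := ⟨⟨0, Nat.pos_of_ne_zero (NeZero.ne Q)⟩⟩
  -- choose fast Cauchy thresholds
  have hpow : ∀ k : ℕ, (0:ℝ) < (1/2)^k := fun k => by positivity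
  let Nf : ℕ → ℕ := fun k => (hu ((1/2)^k) (hpow k)).choose
  have hNf : ∀ k, ∀ m ≥ Nf k, ∀ n ≥ Nf k, qS (u m) (u n) < (1/2)^k :=
    fun k => (hu ((1/2)^k) (hpow k)).choose_spec
  -- build a strictly increasing subsequence
  let M : ℕ → ℕ := fun k => Nat.rec (Nf 0) (fun k Mk => max (Mk + 1) (Nf (k+1))) k
  have hM1 : ∀ k, Nf k ≤ M k := by
    intro k
    cases k with
    | zero => exact le_refl _
    | succ k => exact le_max_right _ _
  have hM2 : ∀ k, M k < M (k+1) := fun k =>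
    lt_of_lt_of_le (Nat.lt_succ_self _) (le_max_left _ _)
  have hMmono : StrictMono M := strictMono_nat_of_lt_succ hM2
  have hstep : ∀ k, qS (u (M k)) (u (M (k+1))) < (1/2)^k := fun k =>
    hNf k _ (hM1 k) _ ((hM1 k).trans (hM2 k).le)
  -- optimal permutations and their composition
  let σ : ℕ → Equiv.Perm (Fin Q) := fun k => (qS_exists_perm (u (M k)) (u (M (k+1)))).choose
  have hσ : ∀ k, qS (u (M k)) (u (M (k+1))) = ⨆ i, dist (u (M k) i) (u (M (k+1)) (σ k i)) :=
    fun k => (qS_exists_perm (u (M k)) (u (M (k+1)))).choose_spec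
  let τ : ℕ → Equiv.Perm (Fin Q) := fun k => Nat.rec 1 (fun k τk => σ k * τk) k
  have hτ : ∀ k, τ (k+1) = σ k * τ k := fun k => rfl
  let v : ℕ → Fin Q → Y := fun k i => u (M k) (τ k i)
  have hvdist : ∀ i k, dist (v k i) (v (k+1) i) ≤ 1 * (1/2)^k := by
    intro i k
    have h1 : dist (v k i) (v (k+1) i)
        = dist (u (M k) (τ k i)) (u (M (k+1)) (σ k (τ k i))) := by
      simp only [v, hτ]; rfl
    rw [h1, one_mul]
    calc dist (u (M k) (τ k i)) (u (M (k+1)) (σ k (τ k i)))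
        ≤ ⨆ j, dist (u (M k) j) (u (M (k+1)) (σ k j)) := dist_le_iSup _ _ _ _
      _ = qS (u (M k)) (u (M (k+1))) := (hσ k).symm
      _ ≤ (1/2)^k := (hstep k).le
  -- coordinatewise limits
  have hc : ∀ i, ∃ b : Y, Filter.Tendsto (fun k => v k i) Filter.atTop (nhds b) := by
    intro i
    exact cauchySeq_tendsto_of_complete
      (cauchySeq_of_le_geometric (1/2) 1 (by norm_num) (hvdist i))
  let a : Fin Q → Y := fun i => (hc i).choose
  have ha : ∀ i, Filter.Tendsto (fun k => v k i) Filter.atTop (nhds (a i)) :=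
    fun i => (hc i).choose_spec
  have hbound : ∀ k i, dist (v k i) (a i) ≤ 2 * (1/2)^k := by
    intro k i
    have := dist_le_of_le_geometric_of_tendsto (1/2) 1 (by norm_num) (hvdist i) (ha i) k
    calc dist (v k i) (a i) ≤ 1 * (1/2)^k / (1 - 1/2) := this
      _ = 2 * (1/2)^k := by ring
  -- distance from u (M k) to a
  have hqa : ∀ k, qS (u (M k)) a ≤ 2 * (1/2)^k := by
    intro k
    calc qS (u (M k)) a ≤ ⨆ i, dist (u (M k) i) (a ((τ k)⁻¹ i)) := qS_le _ _ _
      _ ≤ 2 * (1/2)^k := by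
          apply ciSup_le
          intro i
          have h1 : u (M k) i = v k ((τ k)⁻¹ i) := by
            simp only [v, ← Equiv.Perm.mul_apply, mul_inv_cancel, Equiv.Perm.one_apply]
          rw [h1]
          exact hbound k ((τ k)⁻¹ i)
  refine ⟨a, ?_⟩
  rw [Metric.tendsto_atTop]
  intro ε hε
  obtain ⟨N', hN'⟩ := hu (ε/2) (by positivity)
  obtain ⟨k0, hk0⟩ := exists_pow_lt_of_lt_one (show (0:ℝ) < ε/4 by positivity)
    (show (1:ℝ)/2 < 1 by norm_num)
  refine ⟨max N' (M (max k0 N')), ?_⟩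
  intro n hn
  set k := max k0 N'
  have hMk : N' ≤ M k := le_trans (le_max_right k0 N') (le_trans (hMmono.le_apply) le_rfl)
  have hn' : N' ≤ n := le_trans (le_max_left _ _) hn
  have h1 : qS (u n) (u (M k)) < ε/2 := hN' n hn' (M k) hMk
  have h2 : qS (u (M k)) a ≤ 2 * (1/2)^k := hqa k
  have h3 : (1/2:ℝ)^k ≤ (1/2)^k0 :=
    pow_le_pow_of_le_one (by norm_num) (by norm_num) (le_max_left _ _)
  have h4 : qS (u n) a ≤ qS (u n) (u (M k)) + qS (u (M k)) a := qS_triangle _ _ _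
  have h5 : qS (u n) a < ε := by
    have : 2 * (1/2:ℝ)^k ≤ 2 * (ε/4) := by
      have := h3.trans hk0.le
      linarith
    calc qS (u n) a ≤ qS (u n) (u (M k)) + qS (u (M k)) a := h4
      _ < ε/2 + 2 * (ε/4) := by
          apply add_lt_add_of_lt_of_le h1
          linarith
      _ = ε := by ring
  rw [Real.dist_eq, sub_zero, abs_of_nonneg (qS_nonneg _ _)]
  exact h5
end

section
/- If (xⁿ) is a Cauchy sequence in Q_Q(Y), then there exists a subsequence (x^{n_l}) and labelings x^{n_l} = ∑ᵢ₌₁^Q ⟦xᵢ^{n_l}⟧ such that for each i = 1,...,Q the sequence (xᵢ^{n_l})_l is Cauchy in Y. -/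
theorem exists_perm_forall_dist_lt_of_qS_lt {Y : Type*} [MetricSpace Y] {Q : ℕ}
    {x y : Fin Q → Y} {ε : ℝ} (h : qS x y < ε) :
    ∃ σ : Equiv.Perm (Fin Q), ∀ i, dist (x i) (y (σ i)) < ε := by
  have hrange : qS x y = ⨅ σ : Equiv.Perm (Fin Q), ⨆ i, dist (x i) (y (σ i)) := by
    rw [qS, ← sInf_range]
    congr 1
    ext r
    simp only [Set.mem_ofPred_eq, Set.mem_range, eq_comm]
  obtain ⟨σ, hσ⟩ := exists_lt_of_ciInf_lt (hrange ▸ h)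
  exact ⟨σ, fun i => (le_ciSup (Set.finite_range _).bddAbove i).trans_lt hσ⟩

theorem exists_strictMono_forall_lt_of_cauchy {α : Type*} (d : α → α → ℝ) {u : ℕ → α}
    (hu : ∀ ε : ℝ, 0 < ε → ∃ N, ∀ m ≥ N, ∀ n ≥ N, d (u m) (u n) < ε)
    {ε : ℕ → ℝ} (hε : ∀ n, 0 < ε n) :
    ∃ φ : ℕ → ℕ, StrictMono φ ∧ ∀ n, d (u (φ n)) (u (φ (n + 1))) < ε n := by
  have hev : ∀ n, ∃ N, ∀ k ≥ N, ∀ l ≥ k, d (u k) (u l) < ε n := fun n => by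
    obtain ⟨N, hN⟩ := hu (ε n) (hε n)
    exact ⟨N, fun k hk l hl => hN k hk l (hk.trans hl)⟩
  obtain ⟨φ, hφ, hφd⟩ := Filter.extraction_forall_of_eventually' hev
  exact ⟨φ, hφ, fun n => hφd n _ (hφ n.lt_succ_self).le⟩

def composePerms {ι : Type*} (σ : ℕ → Equiv.Perm ι) : ℕ → Equiv.Perm ι
  | 0 => 1
  | l + 1 => σ l * composePerms σ l

theorem cauchySeq_relabel_of_summable {ι Y : Type*} [PseudoMetricSpace Y] {x : ℕ → ι → Y}
    {σ : ℕ → Equiv.Perm ι} {d : ℕ → ℝ} (hd : Summable d)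
    (hσ : ∀ l i, dist (x l i) (x (l + 1) (σ l i)) ≤ d l) (i : ι) :
    CauchySeq fun l => x l (composePerms σ l i) :=
  cauchySeq_of_dist_le_of_summable d (fun l => hσ l _) hd

theorem stmt3_general {Y : Type*} [MetricSpace Y] {Q : ℕ}
    (u : ℕ → Fin Q → Y)
    (hu : ∀ ε : ℝ, 0 < ε → ∃ N, ∀ m ≥ N, ∀ n ≥ N, qS (u m) (u n) < ε) :
    ∃ φ : ℕ → ℕ, StrictMono φ ∧
      ∃ v : ℕ → Fin Q → Y,
        (∀ l, (List.ofFn (v l) : Multiset Y) = List.ofFn (u (φ l))) ∧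
        ∀ i : Fin Q, CauchySeq (fun l => v l i) := by
  obtain ⟨φ, hφ, hclose⟩ := exists_strictMono_forall_lt_of_cauchy qS hu
    (ε := fun n => (1 / 2 : ℝ) ^ n) fun n => by positivity
  choose σ hσ using fun l => exists_perm_forall_dist_lt_of_qS_lt (hclose l)
  refine ⟨φ, hφ, fun l => u (φ l) ∘ composePerms σ l, fun l => ?_, fun i => ?_⟩
  · exact Multiset.coe_eq_coe.2 ((composePerms σ l).ofFn_comp_perm _)
  · exact cauchySeq_relabel_of_summable summable_geometric_two (fun l j => (hσ l j).le) i

/-- a 𝒮-Cauchy sequence in Q_Q(Y) has a subsequence admitting labelings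
(representatives with the same multiset) whose Q branches are each Cauchy in Y. -/
theorem stmt3 {Y : Type*} [MetricSpace Y] {Q : ℕ} [NeZero Q]
    (u : ℕ → Fin Q → Y)
    (hu : ∀ ε : ℝ, 0 < ε → ∃ N, ∀ m ≥ N, ∀ n ≥ N, qS (u m) (u n) < ε) :
    ∃ φ : ℕ → ℕ, StrictMono φ ∧
      ∃ v : ℕ → Fin Q → Y,
        (∀ l, (List.ofFn (v l) : Multiset Y) = List.ofFn (u (φ l))) ∧
        ∀ i : Fin Q, CauchySeq (fun l => v l i) :=
  stmt3_general u hu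
end

section
/- A γ-weakly convex geodesic space Y is Lipschitz n-connected for every n ∈ ℕ: there is a constant λ (depending only on γ and n) such that every Lipschitz map f : Sⁿ → Y extends to a Lipschitz map F : B^{n+1} → Y with Lip(F) ≤ λ·Lip(f). -/
/-- A γ-weakly convex geodesic bicombing on a metric space `Y`: a choice of
arc-length geodesic `c x y : [0, dist x y] → Y` from `x` to `y` for every pair,
satisfying the weak convexity inequality with constant `γ`. -/
structure WeakBicombing (Y : Type*) [MetricSpace Y] (γ : ℝ) where
  c : Y → Y → ℝ → Y
  source : ∀ x y, c x y 0 = x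
  target : ∀ x y, c x y (dist x y) = y
  isometry : ∀ x y, ∀ s ∈ Set.Icc (0:ℝ) (dist x y), ∀ t ∈ Set.Icc (0:ℝ) (dist x y),
    dist (c x y s) (c x y t) = |s - t|
  convex : ∀ x y z, ∀ t ∈ Set.Icc (0:ℝ) 1,
    dist (c x y (t * dist x y)) (c x z (t * dist x z)) ≤ γ * t * dist y z

noncomputable def sp (n : ℕ) : ↥(Metric.sphere (0 : EuclideanSpace ℝ (Fin (n+1))) 1) :=
  ⟨EuclideanSpace.single 0 1, by simp [mem_sphere_zero_iff_norm, EuclideanSpace.norm_single]⟩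

open Classical in
noncomputable def uproj (n : ℕ) (x : EuclideanSpace ℝ (Fin (n+1))) :
    ↥(Metric.sphere (0 : EuclideanSpace ℝ (Fin (n+1))) 1) :=
  if h : x = 0 then sp n else ⟨‖x‖⁻¹ • x, by
    have h0 : ‖x‖ ≠ 0 := norm_ne_zero_iff.mpr h
    simp [mem_sphere_zero_iff_norm, norm_smul, inv_mul_cancel₀ h0]⟩

theorem uproj_ne (n : ℕ) (x : EuclideanSpace ℝ (Fin (n+1))) (h : x ≠ 0) :
    (uproj n x).1 = ‖x‖⁻¹ • x := by rw [uproj, dif_neg h]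

theorem uproj_sphere (n : ℕ) (v : EuclideanSpace ℝ (Fin (n+1)))
    (hv : v ∈ Metric.sphere (0 : EuclideanSpace ℝ (Fin (n+1))) 1) :
    uproj n v = ⟨v, hv⟩ := by
  have hv1 : ‖v‖ = 1 := mem_sphere_zero_iff_norm.mp hv
  have hv0 : v ≠ 0 := by intro h; rw [h] at hv1; simp at hv1
  exact Subtype.ext (by rw [uproj_ne n v hv0, hv1]; simp)

/-- a γ-weakly convex geodesic space is Lipschitz n-connected for every n,
with a constant λ depending only on γ and n: every K-Lipschitz map from the unit sphere
in ℝ^{n+1} extends to a (λ·K)-Lipschitz map on the closed unit ball. -/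
theorem stmt7 (n : ℕ) (γ : ℝ) (hγ : 1 ≤ γ) :
    ∃ lam : NNReal, ∀ (Y : Type) (_ : MetricSpace Y), Nonempty (WeakBicombing Y γ) →
      ∀ (K : NNReal)
        (f : ↥(Metric.sphere (0 : EuclideanSpace ℝ (Fin (n+1))) 1) → Y),
        LipschitzWith K f →
        ∃ F : ↥(Metric.closedBall (0 : EuclideanSpace ℝ (Fin (n+1))) 1) → Y,
          LipschitzWith (lam * K) F ∧
          ∀ (v : EuclideanSpace ℝ (Fin (n+1))) (hv : v ∈ Metric.sphere (0 : EuclideanSpace ℝ (Fin (n+1))) 1),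
            F ⟨v, Metric.sphere_subset_closedBall hv⟩ = f ⟨v, hv⟩ := by
  have hγ0 : (0:ℝ) ≤ γ := zero_le_one.trans hγ
  have hlam0 : (0:ℝ) ≤ 2*γ+2 := by linarith
  refine ⟨⟨2*γ+2, hlam0⟩, ?_⟩
  rintro Y _ ⟨B⟩ K f hf
  set y₀ := f (sp n) with hy₀
  have hK0 : (0:ℝ) ≤ (K:ℝ) := K.2
  -- distance from basepoint to any value of f is at most 2K
  have hD : ∀ v, dist y₀ (f v) ≤ 2 * K := by
    intro v
    have h1 := hf.dist_le_mul (sp n) v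
    have h2 : dist (sp n) v ≤ 2 := by
      rw [Subtype.dist_eq, dist_eq_norm]
      calc ‖(sp n).1 - v.1‖ ≤ ‖(sp n).1‖ + ‖v.1‖ := norm_sub_le _ _
        _ = 2 := by
          rw [mem_sphere_zero_iff_norm.mp (sp n).2, mem_sphere_zero_iff_norm.mp v.2]; norm_num
    calc dist y₀ (f v) ≤ K * dist (sp n) v := h1
      _ ≤ K * 2 := mul_le_mul_of_nonneg_left h2 hK0
      _ = 2 * K := by ring
  -- distances along a single geodesic ray
  have hray : ∀ (w : Y), ∀ a ∈ Set.Icc (0:ℝ) 1, ∀ b ∈ Set.Icc (0:ℝ) 1,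
      dist (B.c y₀ w (a * dist y₀ w)) (B.c y₀ w (b * dist y₀ w)) = |a - b| * dist y₀ w := by
    intro w a ha b hb
    have hd0 : (0:ℝ) ≤ dist y₀ w := dist_nonneg
    have h1 := B.isometry y₀ w (a * dist y₀ w)
      ⟨mul_nonneg ha.1 hd0, by nlinarith [ha.2]⟩ (b * dist y₀ w)
      ⟨mul_nonneg hb.1 hd0, by nlinarith [hb.2]⟩
    rw [h1, ← sub_mul, abs_mul, abs_of_nonneg hd0]
  refine ⟨fun x => B.c y₀ (f (uproj n x.1)) (‖x.1‖ * dist y₀ (f (uproj n x.1))), ?_, ?_⟩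
  · -- Lipschitz bound
    apply LipschitzWith.of_dist_le_mul
    intro x y
    show _ ≤ (2*γ+2) * (K:ℝ) * dist x y
    have hx1 : ‖x.1‖ ≤ 1 := mem_closedBall_zero_iff.mp x.2
    have hy1 : ‖y.1‖ ≤ 1 := mem_closedBall_zero_iff.mp y.2
    have hdxy : dist x y = ‖x.1 - y.1‖ := by rw [Subtype.dist_eq, dist_eq_norm]
    -- the degenerate case where one of the points is the origin
    have hzero : ∀ z w : ↥(Metric.closedBall (0 : EuclideanSpace ℝ (Fin (n+1))) 1),
        z.1 = 0 →
        dist (B.c y₀ (f (uproj n z.1)) (‖z.1‖ * dist y₀ (f (uproj n z.1))))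
          (B.c y₀ (f (uproj n w.1)) (‖w.1‖ * dist y₀ (f (uproj n w.1)))) ≤
          (2*γ+2) * K * dist z w := by
      intro z w hz0
      have hw1 : ‖w.1‖ ≤ 1 := mem_closedBall_zero_iff.mp w.2
      have h1 := hray (f (uproj n w.1)) 0 ⟨le_refl _, zero_le_one⟩ ‖w.1‖ ⟨norm_nonneg _, hw1⟩
      rw [zero_mul, B.source] at h1
      have hz : B.c y₀ (f (uproj n z.1)) (‖z.1‖ * dist y₀ (f (uproj n z.1))) = y₀ := by
        rw [hz0]; simp [B.source]
      rw [hz, h1]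
      have hdzw : dist z w = ‖w.1‖ := by
        rw [Subtype.dist_eq, dist_eq_norm, hz0, zero_sub, norm_neg]
      rw [hdzw]
      have hDw := hD (uproj n w.1)
      have h2 : |0 - ‖w.1‖| = ‖w.1‖ := by rw [zero_sub, abs_neg, abs_of_nonneg (norm_nonneg _)]
      rw [h2]
      nlinarith [norm_nonneg w.1, mul_nonneg hK0 (norm_nonneg w.1)]
    by_cases hx0 : x.1 = 0
    · exact hzero x y hx0
    by_cases hy0 : y.1 = 0
    · rw [dist_comm, dist_comm x y]; exact hzero y x hy0
    -- main case
    have hrx0 : ‖x.1‖ ≠ 0 := norm_ne_zero_iff.mpr hx0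
    have hry0 : ‖y.1‖ ≠ 0 := norm_ne_zero_iff.mpr hy0
    set wx := f (uproj n x.1) with hwx
    set wy := f (uproj n y.1) with hwy
    have hconv := B.convex y₀ wx wy ‖x.1‖ ⟨norm_nonneg _, hx1⟩
    have hiso := hray wy ‖x.1‖ ⟨norm_nonneg _, hx1⟩ ‖y.1‖ ⟨norm_nonneg _, hy1⟩
    have htri := dist_triangle (B.c y₀ wx (‖x.1‖ * dist y₀ wx))
      (B.c y₀ wy (‖x.1‖ * dist y₀ wy)) (B.c y₀ wy (‖y.1‖ * dist y₀ wy))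
    have hff : dist wx wy ≤ K * dist (uproj n x.1) (uproj n y.1) := hf.dist_le_mul _ _
    have hvv : dist (uproj n x.1) (uproj n y.1) = ‖‖x.1‖⁻¹ • x.1 - ‖y.1‖⁻¹ • y.1‖ := by
      rw [Subtype.dist_eq, uproj_ne n x.1 hx0, uproj_ne n y.1 hy0, dist_eq_norm]
    -- key Euclidean estimate
    have key : ‖x.1‖ * ‖‖x.1‖⁻¹ • x.1 - ‖y.1‖⁻¹ • y.1‖ ≤ 2 * ‖x.1 - y.1‖ := by
      have e1 : ‖x.1‖ * ‖‖x.1‖⁻¹ • x.1 - ‖y.1‖⁻¹ • y.1‖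
          = ‖x.1 - (‖x.1‖ * ‖y.1‖⁻¹) • y.1‖ := by
        rw [← norm_smul_of_nonneg (norm_nonneg x.1), smul_sub, smul_smul, smul_smul,
          mul_inv_cancel₀ hrx0, one_smul]
      have e2 : ‖x.1 - (‖x.1‖ * ‖y.1‖⁻¹) • y.1‖
          ≤ ‖x.1 - y.1‖ + ‖y.1 - (‖x.1‖ * ‖y.1‖⁻¹) • y.1‖ := by
        calc ‖x.1 - (‖x.1‖ * ‖y.1‖⁻¹) • y.1‖
            = dist x.1 ((‖x.1‖ * ‖y.1‖⁻¹) • y.1) := (dist_eq_norm _ _).symm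
          _ ≤ dist x.1 y.1 + dist y.1 ((‖x.1‖ * ‖y.1‖⁻¹) • y.1) := dist_triangle _ _ _
          _ = ‖x.1 - y.1‖ + ‖y.1 - (‖x.1‖ * ‖y.1‖⁻¹) • y.1‖ := by
              rw [dist_eq_norm, dist_eq_norm]
      have e3 : ‖y.1 - (‖x.1‖ * ‖y.1‖⁻¹) • y.1‖ = |‖y.1‖ - ‖x.1‖| := by
        have h : y.1 - (‖x.1‖ * ‖y.1‖⁻¹) • y.1 = (1 - ‖x.1‖ * ‖y.1‖⁻¹) • y.1 := by
          rw [sub_smul, one_smul]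
        rw [h, norm_smul, Real.norm_eq_abs, ← abs_of_nonneg (norm_nonneg y.1), ← abs_mul]
        congr 1
        field_simp
        rw [abs_of_nonneg (norm_nonneg y.1)]; ring
      have e4 : |‖y.1‖ - ‖x.1‖| ≤ ‖x.1 - y.1‖ :=
        (abs_norm_sub_norm_le _ _).trans (le_of_eq (norm_sub_rev _ _))
      linarith [e1.le, e2, e3.le, e4, e1.ge, e3.ge]
    have habs : |‖x.1‖ - ‖y.1‖| ≤ ‖x.1 - y.1‖ := abs_norm_sub_norm_le _ _
    have hDw := hD (uproj n y.1)
    rw [hdxy]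
    calc dist (B.c y₀ wx (‖x.1‖ * dist y₀ wx)) (B.c y₀ wy (‖y.1‖ * dist y₀ wy))
        ≤ dist (B.c y₀ wx (‖x.1‖ * dist y₀ wx)) (B.c y₀ wy (‖x.1‖ * dist y₀ wy))
          + dist (B.c y₀ wy (‖x.1‖ * dist y₀ wy)) (B.c y₀ wy (‖y.1‖ * dist y₀ wy)) := htri
      _ ≤ γ * ‖x.1‖ * dist wx wy + |‖x.1‖ - ‖y.1‖| * dist y₀ wy := by
          rw [hiso]; exact add_le_add hconv (le_refl _)
      _ ≤ γ * ‖x.1‖ * (K * ‖‖x.1‖⁻¹ • x.1 - ‖y.1‖⁻¹ • y.1‖)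
          + ‖x.1 - y.1‖ * (2 * K) := by
          refine add_le_add ?_ ?_
          · refine mul_le_mul_of_nonneg_left ?_ (mul_nonneg hγ0 (norm_nonneg _))
            rw [← hvv]; exact hff
          · exact mul_le_mul habs hDw dist_nonneg (norm_nonneg _)
      _ = γ * K * (‖x.1‖ * ‖‖x.1‖⁻¹ • x.1 - ‖y.1‖⁻¹ • y.1‖) + 2 * K * ‖x.1 - y.1‖ := by ring
      _ ≤ γ * K * (2 * ‖x.1 - y.1‖) + 2 * K * ‖x.1 - y.1‖ := by
          refine add_le_add (mul_le_mul_of_nonneg_left key (mul_nonneg hγ0 hK0)) (le_refl _)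
      _ = (2*γ+2) * K * ‖x.1 - y.1‖ := by ring
  · -- boundary condition
    intro v hv
    have hv1 : ‖v‖ = 1 := mem_sphere_zero_iff_norm.mp hv
    show B.c y₀ (f (uproj n v)) (‖v‖ * dist y₀ (f (uproj n v))) = f ⟨v, hv⟩
    rw [uproj_sphere n v hv, hv1, one_mul, B.target]
end

section
/- The two-valued function f : S¹ → Q₂(ℝ²) defined by f(cos θ, sin θ) = ⟦(cos(θ/2), sin(θ/2))⟧ + ⟦(−cos(θ/2), −sin(θ/2))⟧ is well-defined (independent of the choice of θ) and Lipschitz, but there do not exist continuous functions g₁, g₂ : S¹ → ℝ² with f(x) = ⟦g₁(x)⟧ + ⟦g₂(x)⟧ for all x ∈ S¹. -/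
open Complex

lemma aux_sq_cases {a b : ℂ} (h : a ^ 2 = b ^ 2) : a = b ∨ a = -b := by
  have h0 : (a - b) * (a + b) = 0 := by linear_combination h
  rcases mul_eq_zero.1 h0 with h1 | h1
  · exact Or.inl (sub_eq_zero.1 h1)
  · exact Or.inr (eq_neg_of_add_eq_zero_left h1)

lemma aux_min_le {w v : ℂ} (hw : ‖w‖ = 1) (hv : ‖v‖ = 1) :
    min ‖w - v‖ ‖w + v‖ ≤ ‖w ^ 2 - v ^ 2‖ := by
  have hpar : ‖w + v‖ * ‖w + v‖ + ‖w - v‖ * ‖w - v‖ = 2 * (‖w‖ * ‖w‖ + ‖v‖ * ‖v‖) :=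
    by simpa only [sq] using parallelogram_law_with_norm ℝ w v
  rw [hw, hv] at hpar
  have hmax : (1 : ℝ) ≤ max ‖w - v‖ ‖w + v‖ := by
    by_contra hc
    push_neg at hc
    have h1 : ‖w - v‖ < 1 := lt_of_le_of_lt (le_max_left _ _) hc
    have h2 : ‖w + v‖ < 1 := lt_of_le_of_lt (le_max_right _ _) hc
    nlinarith [norm_nonneg (w - v), norm_nonneg (w + v)]
  have hprod : ‖w - v‖ * ‖w + v‖ = ‖w ^ 2 - v ^ 2‖ := by
    rw [← norm_mul]; ring_nf
  calc min ‖w - v‖ ‖w + v‖ ≤ min ‖w - v‖ ‖w + v‖ * max ‖w - v‖ ‖w + v‖ := by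
        apply le_mul_of_one_le_right (le_min (norm_nonneg _) (norm_nonneg _)) hmax
    _ = ‖w - v‖ * ‖w + v‖ := by
        rcases le_total ‖w - v‖ ‖w + v‖ with h | h
        · rw [min_eq_left h, max_eq_right h]
        · rw [min_eq_right h, max_eq_left h]; ring
    _ = ‖w ^ 2 - v ^ 2‖ := hprod

lemma aux_qS_le {x y : Fin 2 → ℂ} {c : ℝ} (σ : Equiv.Perm (Fin 2))
    (h0 : dist (x 0) (y (σ 0)) ≤ c) (h1 : dist (x 1) (y (σ 1)) ≤ c) :
    qS x y ≤ c := by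
  have hbdd : BddBelow {r | ∃ σ : Equiv.Perm (Fin 2), r = ⨆ i, dist (x i) (y (σ i))} := by
    refine ⟨0, ?_⟩
    rintro r ⟨τ, rfl⟩
    have : dist (x 0) (y (τ 0)) ≤ ⨆ i, dist (x i) (y (τ i)) :=
      le_ciSup (f := fun i => dist (x i) (y (τ i)))
        (Set.Finite.bddAbove (Set.finite_range _)) 0
    exact le_trans dist_nonneg this
  refine le_trans (csInf_le hbdd ⟨σ, rfl⟩) ?_
  refine ciSup_le fun i => ?_
  fin_cases i
  · exact h0
  · exact h1

/-- the two-valued square-root function f : S¹ → Q₂(ℝ²),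
f(cos θ, sin θ) = ⟦(cos(θ/2), sin(θ/2))⟧ + ⟦(−cos(θ/2), −sin(θ/2))⟧ — identifying
ℝ² with ℂ, the value of f at z is the unordered pair {w, −w} where w² = z — is
well defined (independent of the representative pair), Lipschitz, but admits no
continuous selection into two single-valued branches. -/
theorem stmt17 :
    (∀ z : ℂ, ‖z‖ = 1 → ∀ w w' : Fin 2 → ℂ,
      ((w 0) ^ 2 = z ∧ w 1 = -(w 0)) → ((w' 0) ^ 2 = z ∧ w' 1 = -(w' 0)) →
      (List.ofFn w : Multiset ℂ) = List.ofFn w') ∧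
    (∀ f : ↥(Metric.sphere (0 : ℂ) 1) → Fin 2 → ℂ,
      (∀ z, (f z 0) ^ 2 = (z : ℂ) ∧ f z 1 = -(f z 0)) →
      (∃ K : ℝ, ∀ a b, qS (f a) (f b) ≤ K * dist a b) ∧
      ¬ ∃ g₁ g₂ : ↥(Metric.sphere (0 : ℂ) 1) → ℂ, Continuous g₁ ∧ Continuous g₂ ∧
        ∀ z, (List.ofFn (f z) : Multiset ℂ) = {g₁ z, g₂ z}) := by
  constructor
  · -- well-definedness
    rintro z hz w w' ⟨hw0, hw1⟩ ⟨hw'0, hw'1⟩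
    have hsq : (w 0) ^ 2 = (w' 0) ^ 2 := by rw [hw0, hw'0]
    have hlist : (List.ofFn w : List ℂ) = [w 0, w 1] := by
      simp [List.ofFn_succ]
    have hlist' : (List.ofFn w' : List ℂ) = [w' 0, w' 1] := by
      simp [List.ofFn_succ]
    rcases aux_sq_cases hsq with h | h
    · rw [hlist, hlist', h, hw1, hw'1, h]
    · rw [hlist, hlist', h, hw1, hw'1, h, neg_neg]
      exact Multiset.coe_eq_coe.2 (List.Perm.swap _ _ _)
  · intro f hf
    -- each f z 0 has norm 1
    have hnorm : ∀ z : ↥(Metric.sphere (0 : ℂ) 1), ‖f z 0‖ = 1 := by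
      intro z
      have hz : ‖(z : ℂ)‖ = 1 := mem_sphere_zero_iff_norm.1 z.2
      have : ‖f z 0‖ ^ 2 = 1 := by
        rw [← norm_pow, (hf z).1, hz]
      nlinarith [norm_nonneg (f z 0)]
    constructor
    · -- Lipschitz with K = 1
      refine ⟨1, fun a b => ?_⟩
      rw [one_mul]
      set w := f a 0 with hwdef
      set v := f b 0 with hvdef
      have hdist : dist (a : ↥(Metric.sphere (0 : ℂ) 1)) b = ‖w ^ 2 - v ^ 2‖ := by
        rw [Subtype.dist_eq, dist_eq_norm, (hf a).1, (hf b).1]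
      have hmin := aux_min_le (hnorm a) (hnorm b)
      rcases le_total ‖w - v‖ ‖w + v‖ with h | h
      · -- use identity permutation
        rw [min_eq_left h] at hmin
        refine aux_qS_le 1 ?_ ?_
        · show dist w v ≤ _
          rw [hdist, dist_eq_norm]; exact hmin
        · show dist (f a 1) (f b 1) ≤ _
          rw [(hf a).2, (hf b).2, hdist, dist_eq_norm, ← hwdef, ← hvdef]
          calc ‖-w - -v‖ = ‖w - v‖ := by rw [← norm_neg]; ring_nf
            _ ≤ _ := hmin
      · -- use swap permutation
        rw [min_eq_right h] at hmin
        refine aux_qS_le (Equiv.swap 0 1) ?_ ?_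
        · rw [Equiv.swap_apply_left]
          show dist w (f b 1) ≤ _
          rw [(hf b).2, hdist, dist_eq_norm, ← hvdef]
          calc ‖w - -v‖ = ‖w + v‖ := by ring_nf
            _ ≤ _ := hmin
        · rw [Equiv.swap_apply_right]
          show dist (f a 1) v ≤ _
          rw [(hf a).2, hdist, dist_eq_norm, ← hwdef]
          calc ‖-w - v‖ = ‖w + v‖ := by rw [← norm_neg]; ring_nf
            _ ≤ _ := hmin
    · -- no continuous selection
      rintro ⟨g₁, g₂, hg₁, hg₂, hsel⟩
      -- g₁ z squares to z
      have hg1sq : ∀ z : ↥(Metric.sphere (0 : ℂ) 1), (g₁ z) ^ 2 = (z : ℂ) := by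
        intro z
        have hmem : g₁ z ∈ (List.ofFn (f z) : Multiset ℂ) := by
          rw [hsel z]
          exact Multiset.mem_cons_self _ _
        have hlist : (List.ofFn (f z) : List ℂ) = [f z 0, f z 1] := by
          simp [List.ofFn_succ]
        rw [hlist] at hmem
        have : g₁ z = f z 0 ∨ g₁ z = f z 1 := by simpa using hmem
        rcases this with h | h
        · rw [h]; exact (hf z).1
        · rw [h, (hf z).2, neg_pow, (hf z).1]
          simp
      -- build the loop
      have hsph : ∀ t : ℝ, Complex.exp (t * I) ∈ Metric.sphere (0 : ℂ) 1 := by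
        intro t
        rw [mem_sphere_zero_iff_norm]
        exact Complex.norm_exp_ofReal_mul_I t
      set e : ℝ → ↥(Metric.sphere (0 : ℂ) 1) := fun t => ⟨Complex.exp (t * I), hsph t⟩ with he
      have hecont : Continuous e := by
        apply Continuous.subtype_mk
        exact Complex.continuous_exp.comp (Complex.continuous_ofReal.mul continuous_const)
      set Φ : ℝ → ℂ := fun t => g₁ (e t) * Complex.exp (-(t / 2 : ℝ) * I) with hΦ
      have hΦcont : Continuous Φ := by
        apply Continuous.mul (hg₁.comp hecont)
        exact Complex.continuous_exp.comp
          ((Complex.continuous_ofReal.comp (continuous_id.div_const 2)).neg.mul continuous_const)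
      have hΦsq : ∀ t, (Φ t) ^ 2 = 1 := by
        intro t
        have h1 : (g₁ (e t)) ^ 2 = Complex.exp (t * I) := hg1sq (e t)
        have h2 : (Complex.exp (-(t / 2 : ℝ) * I)) ^ 2 = Complex.exp (-(t : ℂ) * I) := by
          rw [← Complex.exp_nat_mul]
          congr 1
          push_cast
          ring
        calc (Φ t) ^ 2 = (g₁ (e t)) ^ 2 * (Complex.exp (-(t / 2 : ℝ) * I)) ^ 2 := by
              rw [hΦ]; ring
          _ = Complex.exp (t * I) * Complex.exp (-(t : ℂ) * I) := by rw [h1, h2]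
          _ = Complex.exp ((t : ℂ) * I + -(t : ℂ) * I) := (Complex.exp_add _ _).symm
          _ = 1 := by rw [show ((t : ℂ) * I + -(t : ℂ) * I) = 0 by ring, Complex.exp_zero]
      have hΦpm : ∀ t, Φ t = 1 ∨ Φ t = -1 := fun t => aux_sq_cases (by rw [hΦsq t]; ring)
      have he0 : e (2 * Real.pi) = e 0 := by
        apply Subtype.ext
        show Complex.exp (((2 * Real.pi : ℝ) : ℂ) * I) = Complex.exp (((0 : ℝ) : ℂ) * I)
        push_cast
        rw [Complex.exp_two_pi_mul_I, zero_mul, Complex.exp_zero]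
      have hΦ2π : Φ (2 * Real.pi) = - Φ 0 := by
        have hexp : Complex.exp (-(((2 * Real.pi) / 2 : ℝ) : ℂ) * I) = -1 := by
          push_cast
          rw [show (-(2 * (Real.pi : ℂ) / 2) * I) = -((Real.pi : ℂ) * I) by ring,
            Complex.exp_neg, Complex.exp_pi_mul_I]
          norm_num
        have hexp0 : Complex.exp (-(((0 : ℝ) / 2 : ℝ) : ℂ) * I) = 1 := by
          norm_num
        rw [hΦ]
        simp only [he0, hexp, hexp0, mul_one, mul_neg_one]
      -- IVT on real part
      set F : ℝ → ℝ := fun t => (Φ t).re with hF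
      have hFcont : Continuous F := Complex.continuous_re.comp hΦcont
      have hFpm : ∀ t, F t = 1 ∨ F t = -1 := by
        intro t
        rcases hΦpm t with h | h <;> simp [hF, h]
      have hF2π : F (2 * Real.pi) = - F 0 := by simp [hF, hΦ2π]
      have h0mem : (0 : ℝ) ∈ Set.uIcc (F 0) (F (2 * Real.pi)) := by
        rw [hF2π]
        rcases hFpm 0 with h | h <;> rw [h] <;>
          simp [Set.uIcc, Set.mem_Icc]
      have := intermediate_value_uIcc
        (hFcont.continuousOn (s := Set.uIcc 0 (2 * Real.pi))) h0mem
      obtain ⟨t, _, ht⟩ := this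
      rcases hFpm t with h | h <;> rw [ht] at h <;> norm_num at h
end
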